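/- Suppose the set of saddle points of the Lagrangian L is nonempty and the infinite sequences generated by the inexact augmented Lagrangian method are well-defined. Then u^k -> 0 and y^k -> 0 as k -> infinity. -/

import Mathlib

open scoped RealInnerProductSpace
open Filter

noncomputable section

/-- `Evec m` is `ℝ^m` with the Euclidean norm. -/
abbrev Evec (m : ℕ) := EuclideanSpace ℝ (Fin m)

/-- View a plain function `Fin m → ℝ` as a Euclidean vector. -/
def toE {m : ℕ} (v : Fin m → ℝ) : Evec m := WithLp.toLp 2 v

/-- The dual space `ℝ^{m1} × ℝ^{m2}` with the Euclidean (ℓ²) product norm. -/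
abbrev DualPair (m1 m2 : ℕ) := WithLp 2 (Evec m1 × Evec m2)

def mkDual {m1 m2 : ℕ} (lam : Evec m1) (mu : Evec m2) : DualPair m1 m2 := WithLp.toLp 2 (lam, mu)

/-- The primal-dual space `X × ℝ^{m1+m2}` with the Euclidean (ℓ²) product norm. -/
abbrev Triple (X : Type*) [NormedAddCommGroup X] (m1 m2 : ℕ) :=
  WithLp 2 (X × DualPair m1 m2)

def asT {X : Type*} [NormedAddCommGroup X] {m1 m2 : ℕ}
    (q : X × DualPair m1 m2) : Triple X m1 m2 := WithLp.toLp 2 q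

variable {X : Type*} [NormedAddCommGroup X] [InnerProductSpace ℝ X] [FiniteDimensional ℝ X]
variable {m1 m2 : ℕ}

/-- The Lagrangian `L(x, λ, μ) = f(x) + ⟨λ, h(x)⟩ + ⟨μ, g(x)⟩`. -/
def Lag (f : X → ℝ) (h : X → Evec m1) (g : X → Evec m2)
    (x : X) (lam : Evec m1) (mu : Evec m2) : ℝ :=
  f x + ⟪lam, h x⟫ + ⟪mu, g x⟫

/-- `(y, u, v) ∈ ∂L(x, λ, μ)`: the saddle subdifferential of the Lagrangian (for `μ ≥ 0`). -/
def saddleSubdiff (f : X → ℝ) (h : X → Evec m1) (g : X → Evec m2)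
    (x : X) (lam : Evec m1) (mu : Evec m2) (y : X) (u : Evec m1) (v : Evec m2) : Prop :=
  (∀ x' : X, Lag f h g x lam mu + ⟪y, x' - x⟫ ≤ Lag f h g x' lam mu) ∧
  (∀ (lam' : Evec m1) (mu' : Evec m2), (∀ i, 0 ≤ mu' i) →
    Lag f h g x lam' mu' ≤ Lag f h g x lam mu - ⟪u, lam' - lam⟫ - ⟪v, mu' - mu⟫)

/-- The set of saddle points of the Lagrangian: points `(x, (λ, μ))` with `μ ≥ 0`
and `(0,0,0) ∈ ∂L(x, λ, μ)`. -/
def SaddlePoints (f : X → ℝ) (h : X → Evec m1) (g : X → Evec m2) :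
    Set (X × DualPair m1 m2) :=
  {s | ∃ (x : X) (lam : Evec m1) (mu : Evec m2), s = (x, mkDual lam mu) ∧
    (∀ i, 0 ≤ mu i) ∧ saddleSubdiff f h g x lam mu 0 0 0}

/-- `X*`: the solution set of the primal problem (P). -/
def PrimalOpt (f : X → ℝ) (h : X → Evec m1) (g : X → Evec m2) : Set X :=
  {x | h x = 0 ∧ (∀ i, g x i ≤ 0) ∧
    ∀ x' : X, h x' = 0 → (∀ i, g x' i ≤ 0) → f x ≤ f x'}

/-- The dual objective function `d(λ, μ) = inf_x L(x, λ, μ)`, valued in `EReal`. -/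
def dualFun (f : X → ℝ) (h : X → Evec m1) (g : X → Evec m2)
    (lam : Evec m1) (mu : Evec m2) : EReal :=
  ⨅ x : X, ((Lag f h g x lam mu : ℝ) : EReal)

/-- `P*`: the solution set of the dual problem (D). -/
def DualOpt (f : X → ℝ) (h : X → Evec m1) (g : X → Evec m2) : Set (DualPair m1 m2) :=
  {p | ∃ (lam : Evec m1) (mu : Evec m2), p = mkDual lam mu ∧ (∀ i, 0 ≤ mu i) ∧
    ∀ (lam' : Evec m1) (mu' : Evec m2), (∀ i, 0 ≤ mu' i) →
      dualFun f h g lam' mu' ≤ dualFun f h g lam mu}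

/-- The augmented Lagrangian with penalty parameter `c`. -/
def AugLag (f : X → ℝ) (h : X → Evec m1) (g : X → Evec m2) (c : ℝ)
    (x : X) (lam : Evec m1) (mu : Evec m2) : ℝ :=
  f x + ⟪lam, h x⟫ + (c / 2) * ‖h x‖ ^ 2 +
    (1 / (2 * c)) * (‖toE (fun i => max 0 (mu i + c * g x i))‖ ^ 2 - ‖mu‖ ^ 2)

/-- The inexact augmented Lagrangian method of Eckstein and Silva, with relative error
tolerance `σ ∈ [0,1)` and penalty parameters `c k` with `inf_k c k > 0`. -/
structure ALMSeq (f : X → ℝ) (h : X → Evec m1) (g : X → Evec m2)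
    (σ : ℝ) (c : ℕ → ℝ) (x y w : ℕ → X)
    (lam : ℕ → Evec m1) (mu : ℕ → Evec m2) : Prop where
  sigma_nonneg : 0 ≤ σ
  sigma_lt_one : σ < 1
  c_pos : ∀ k, 0 < c k
  c_inf : ∃ cmin > 0, ∀ k, cmin ≤ c k
  mu0_nonneg : ∀ i, 0 ≤ mu 0 i
  /-- `y k` is a subgradient at `x k` of `x ↦ L_{c_k}(x, λ^{k-1}, μ^{k-1})`. -/
  subgrad : ∀ k, 1 ≤ k → ∀ x' : X,
    AugLag f h g (c k) (x k) (lam (k - 1)) (mu (k - 1)) + ⟪y k, x' - x k⟫ ≤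
      AugLag f h g (c k) x' (lam (k - 1)) (mu (k - 1))
  /-- The relative error criterion. -/
  err : ∀ k, 1 ≤ k →
    (2 / c k) * |⟪w (k - 1) - x k, y k⟫| + ‖y k‖ ^ 2 ≤
      σ * (‖h (x k)‖ ^ 2 +
        ‖toE (fun i => min (mu (k - 1) i / c k) (-(g (x k) i)))‖ ^ 2)
  lam_update : ∀ k, 1 ≤ k → lam k = lam (k - 1) + c k • h (x k)
  mu_update : ∀ k, 1 ≤ k → mu k = toE (fun i => max 0 (mu (k - 1) i + c k * g (x k) i))
  w_update : ∀ k, 1 ≤ k → w k = w (k - 1) - c k • y k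

/-!
If `y` is a subgradient of `L_c(·, λ, μ)` at `x`, then `(y, u)` lies in the saddle subdifferential
`∂L(x, p⁺)`, where `p⁺ = (λ + c h(x), max{0, μ + c g(x)})` is the updated multiplier and
`u = (p - p⁺) / c`. In `x`, the augmented Lagrangian lies below `L(·, p⁺)` up to a remainder of
second order at `x`, and convexity of `L(·, p⁺)` makes `y` an exact subgradient; in `p`, this is
complementarity of `μ⁺` and `min{μ / c, -g(x)}`.

Monotonicity of `∂L` against a saddle point `(x*, p*)` together with the relative error criterion
then makes `‖w^k - x*‖² + ‖p^k - p*‖²` decrease by at least `(1 - σ) c_k² ‖u^k‖²` at each step.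
Hence `∑ c_k² ‖u^k‖² < ∞`, so `u^k → 0` as `c_k` is bounded below, and `‖y^k‖² ≤ σ ‖u^k‖²` gives
`y^k → 0`.
-/

open Topology Asymptotics Set

theorem sq_max_zero_le (s t : ℝ) : max 0 t ^ 2 ≤ (max 0 s + (t - s)) ^ 2 := by
  rcases le_total 0 t with ht | ht <;> rcases le_total 0 s with hs | hs <;>
    simp only [max_eq_left, max_eq_right, ht, hs] <;> nlinarith

theorem sub_max_zero_mul_sub_max_zero_nonpos {a : ℝ} (ha : 0 ≤ a) (s : ℝ) :
    (a - max 0 s) * (s - max 0 s) ≤ 0 := by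
  rcases le_total 0 s with hs | hs <;> simp only [max_eq_left, max_eq_right, hs] <;> nlinarith

theorem min_div_neg_eq {c : ℝ} (hc : 0 < c) (m γ : ℝ) :
    min (m / c) (-γ) = (m - max 0 (m + c * γ)) / c := by
  rcases le_total 0 (m + c * γ) with hs | hs
  · rw [max_eq_right hs, min_eq_right (by rw [le_div_iff₀ hc]; linarith)]
    field_simp
    ring
  · rw [max_eq_left hs, min_eq_left (by rw [div_le_iff₀ hc]; linarith), sub_zero]

theorem convexOn_inner_of_nonneg {E ι : Type*} [AddCommGroup E] [Module ℝ E] [Fintype ι]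
    {s : Set E} (hs : Convex ℝ s) {μ : EuclideanSpace ℝ ι} (hμ : ∀ i, 0 ≤ μ i)
    {g : E → EuclideanSpace ℝ ι} (hg : ∀ i, ConvexOn ℝ s (fun z => g z i)) :
    ConvexOn ℝ s (fun z => ⟪μ, g z⟫) := by
  refine ⟨hs, fun x hx y hy a b ha hb hab => ?_⟩
  simp only [PiLp.inner_apply, Real.inner_apply, smul_eq_mul, Finset.mul_sum,
    ← Finset.sum_add_distrib]
  refine Finset.sum_le_sum fun i _ => ?_
  have := (hg i).2 hx hy ha hb hab
  simp only [smul_eq_mul] at this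
  nlinarith [hμ i]

section Analysis

variable {E : Type*} [NormedAddCommGroup E]

theorem norm_sub_smul_sq [InnerProductSpace ℝ E] (a b : E) (c : ℝ) :
    ‖a - c • b‖ ^ 2 = ‖a‖ ^ 2 - 2 * c * ⟪b, a⟫ + c ^ 2 * ‖b‖ ^ 2 := by
  rw [norm_sub_sq_real, real_inner_smul_right, norm_smul, Real.norm_eq_abs, mul_pow, sq_abs,
    real_inner_comm]
  ring

theorem tendsto_zero_of_tendsto_norm_sq {α : Type*} {l : Filter α} {u : α → E}
    (h : Tendsto (fun k => ‖u k‖ ^ 2) l (𝓝 0)) : Tendsto u l (𝓝 0) := by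
  rw [tendsto_zero_iff_norm_tendsto_zero]
  simpa using h.sqrt

theorem DifferentiableAt.isLittleO_norm_sub_sq {F : Type*} [NormedSpace ℝ E]
    [NormedAddCommGroup F] [NormedSpace ℝ F] {φ : E → F} {x₀ : E}
    (hφ : DifferentiableAt ℝ φ x₀) :
    (fun z => ‖φ z - φ x₀‖ ^ 2) =o[𝓝 x₀] (fun z => z - x₀) := by
  have hO := hφ.isBigO_sub.norm_norm
  have ho : (fun z => ‖φ z - φ x₀‖) =o[𝓝 x₀] (fun _ => (1 : ℝ)) := by
    rw [isLittleO_one_iff]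
    exact tendsto_iff_norm_sub_tendsto_zero.1 hφ.continuousAt.tendsto
  simpa [sq, isLittleO_norm_right] using hO.mul_isLittleO ho

theorem ConvexOn.add_inner_le_of_isLittleO [InnerProductSpace ℝ E] {G : E → ℝ}
    (hG : ConvexOn ℝ univ G) {x₀ y : E} {r : E → ℝ} (hr : r =o[𝓝 x₀] (fun z => z - x₀))
    (h : ∀ z, G x₀ + ⟪y, z - x₀⟫ ≤ G z + r z) (z : E) : G x₀ + ⟪y, z - x₀⟫ ≤ G z := by
  -- Apply `h` at `x₀ + t • (z - x₀)`, use convexity on the segment, divide by `t`, let `t → 0⁺`.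
  set d := z - x₀
  have hpath : Tendsto (fun t : ℝ => x₀ + t • d) (𝓝[>] 0) (𝓝 x₀) := by
    have : Continuous (fun t : ℝ => x₀ + t • d) := by fun_prop
    simpa using (this.tendsto 0).mono_left nhdsWithin_le_nhds
  have hrt : (fun t : ℝ => r (x₀ + t • d)) =o[𝓝[>] 0] (fun t => t) := by
    refine (hr.comp_tendsto hpath).trans_isBigO (isBigO_of_le' (c := ‖d‖) _ fun t => ?_)
    simp [norm_smul, mul_comm]
  have hle : ∀ᶠ t in 𝓝[>] 0, ⟪y, d⟫ - (G z - G x₀) ≤ r (x₀ + t • d) / t := by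
    filter_upwards [Ioc_mem_nhdsGT zero_lt_one] with t ⟨ht0, ht1⟩
    have hconv := hG.2 (mem_univ x₀) (mem_univ z) (sub_nonneg.2 ht1) ht0.le (sub_add_cancel 1 t)
    have hseg : (1 - t) • x₀ + t • z = x₀ + t • d := by simp only [d]; module
    have hsub := h (x₀ + t • d)
    rw [hseg, smul_eq_mul, smul_eq_mul] at hconv
    rw [add_sub_cancel_left, real_inner_smul_right] at hsub
    rw [le_div_iff₀ ht0]
    nlinarith
  linarith [ge_of_tendsto hrt.tendsto_div_nhds_zero hle]

theorem tendsto_zero_of_add_le {a t : ℕ → ℝ} (ha : ∀ k, 0 ≤ a k) (ht : ∀ k, 0 ≤ t k)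
    (h : ∀ k, a (k + 1) + t k ≤ a k) : Tendsto t atTop (𝓝 0) := by
  have hsum : ∀ n, ∑ j ∈ Finset.range n, t j + a n ≤ a 0 := by
    intro n
    induction n with
    | zero => simp
    | succ n ih => rw [Finset.sum_range_succ]; linarith [h n]
  exact (summable_of_sum_range_le ht fun n => by linarith [hsum n, ha n]).tendsto_atTop_zero

/-- The Fejér step of the relative-error hybrid proximal point method of Solodov and Svaiter. -/
theorem fejer_step_of_relative_error {F : Type*} [InnerProductSpace ℝ E] [NormedAddCommGroup F]
    [InnerProductSpace ℝ F] {w x y xs : E} {p u ps : F} {c σ : ℝ} (hc : 0 < c)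
    (hmono : 0 ≤ ⟪y, x - xs⟫ + ⟪u, p - c • u - ps⟫)
    (herr : 2 / c * |⟪w - x, y⟫| + ‖y‖ ^ 2 ≤ σ * ‖u‖ ^ 2) :
    ‖w - c • y - xs‖ ^ 2 + ‖p - c • u - ps‖ ^ 2 + (1 - σ) * c ^ 2 * ‖u‖ ^ 2 ≤
      ‖w - xs‖ ^ 2 + ‖p - ps‖ ^ 2 := by
  have ew : ‖w - c • y - xs‖ ^ 2 = ‖w - xs‖ ^ 2 - 2 * c * ⟪y, w - xs⟫ + c ^ 2 * ‖y‖ ^ 2 := by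
    rw [sub_right_comm, norm_sub_smul_sq]
  have ep : ‖p - c • u - ps‖ ^ 2 = ‖p - ps‖ ^ 2 - 2 * c * ⟪u, p - ps⟫ + c ^ 2 * ‖u‖ ^ 2 := by
    rw [sub_right_comm, norm_sub_smul_sq]
  have hu : ⟪u, p - c • u - ps⟫ = ⟪u, p - ps⟫ - c * ‖u‖ ^ 2 := by
    rw [sub_right_comm, inner_sub_right, real_inner_smul_right, real_inner_self_eq_norm_sq]
  have hy : ⟪y, w - xs⟫ = ⟪y, w - x⟫ + ⟪y, x - xs⟫ := by
    rw [← inner_add_right, sub_add_sub_cancel]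
  have habs : -⟪y, w - x⟫ ≤ |⟪w - x, y⟫| := real_inner_comm y (w - x) ▸ neg_le_abs _
  have herr' : 2 * c * |⟪w - x, y⟫| + c ^ 2 * ‖y‖ ^ 2 ≤ σ * c ^ 2 * ‖u‖ ^ 2 := by
    have hexp : c ^ 2 * (2 / c * |⟪w - x, y⟫| + ‖y‖ ^ 2) =
        2 * c * |⟪w - x, y⟫| + c ^ 2 * ‖y‖ ^ 2 := by
      field_simp
    nlinarith [mul_le_mul_of_nonneg_left herr (sq_nonneg c)]
  nlinarith [mul_le_mul_of_nonneg_left hmono (by positivity : (0 : ℝ) ≤ 2 * c)]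

end Analysis

def muUpdate {m : ℕ} (c : ℝ) (μ γ : Evec m) : Evec m := toE fun i => max 0 (μ i + c * γ i)

/-- The `μ`-component `(μ - μ⁺) / c` of the dual residual `u`, see `muUpdate_eq_sub_smul`. -/
def muResidual {m : ℕ} (c : ℝ) (μ γ : Evec m) : Evec m := toE fun i => min (μ i / c) (-γ i)

section Multipliers

variable {m : ℕ}

theorem muUpdate_nonneg (c : ℝ) (μ γ : Evec m) (i : Fin m) : 0 ≤ muUpdate c μ γ i :=
  le_max_left _ _

theorem muUpdate_eq_sub_smul {c : ℝ} (hc : 0 < c) (μ γ : Evec m) :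
    muUpdate c μ γ = μ - c • muResidual c μ γ := by
  ext i
  simp only [muUpdate, muResidual, toE, PiLp.toLp_apply, PiLp.sub_apply, PiLp.smul_apply,
    smul_eq_mul, min_div_neg_eq hc]
  field_simp
  ring

theorem norm_sq_muUpdate_sub_le (c : ℝ) (μ γ γ' : Evec m) :
    ‖muUpdate c μ γ'‖ ^ 2 - ‖muUpdate c μ γ‖ ^ 2 ≤
      2 * c * ⟪muUpdate c μ γ, γ' - γ⟫ + c ^ 2 * ‖γ' - γ‖ ^ 2 := by
  simp only [EuclideanSpace.norm_sq_eq, PiLp.inner_apply, Real.norm_eq_abs, sq_abs,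
    Real.inner_apply, muUpdate, toE, PiLp.sub_apply, Finset.mul_sum,
    ← Finset.sum_sub_distrib, ← Finset.sum_add_distrib]
  refine Finset.sum_le_sum fun i _ => ?_
  have := sq_max_zero_le (μ i + c * γ i) (μ i + c * γ' i)
  nlinarith

/-- `γ + muResidual c μ γ = min{0, μ + c γ} / c` is complementary to `muUpdate c μ γ`. -/
theorem inner_sub_muUpdate_add_muResidual_nonpos {c : ℝ} (hc : 0 < c) (μ γ : Evec m)
    {μ' : Evec m} (hμ' : ∀ i, 0 ≤ μ' i) :
    ⟪μ' - muUpdate c μ γ, γ + muResidual c μ γ⟫ ≤ 0 := by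
  simp only [PiLp.inner_apply, Real.inner_apply, muUpdate, muResidual, toE, PiLp.sub_apply,
    PiLp.add_apply, min_div_neg_eq hc]
  refine Finset.sum_nonpos fun i _ => ?_
  have key := sub_max_zero_mul_sub_max_zero_nonpos (hμ' i) (μ i + c * γ i)
  have : (μ' i - max 0 (μ i + c * γ i)) * (γ i + (μ i - max 0 (μ i + c * γ i)) / c) =
      (μ' i - max 0 (μ i + c * γ i)) * (μ i + c * γ i - max 0 (μ i + c * γ i)) / c := by
    field_simp
    ring
  rw [this]
  exact div_nonpos_of_nonpos_of_nonneg key hc.le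

end Multipliers

section Lagrangian

variable {E : Type*} {f : E → ℝ} {h : E → Evec m1} {g : E → Evec m2}

theorem augLag_sub_augLag_le {c : ℝ} (hc : 0 < c) (lam : Evec m1) (μ : Evec m2) (x₀ z : E) :
    AugLag f h g c z lam μ - AugLag f h g c x₀ lam μ ≤
      Lag f h g z (lam + c • h x₀) (muUpdate c μ (g x₀)) -
        Lag f h g x₀ (lam + c • h x₀) (muUpdate c μ (g x₀)) +
        c / 2 * (‖h z - h x₀‖ ^ 2 + ‖g z - g x₀‖ ^ 2) := by
  have hlam : ⟪lam, h z⟫ + c / 2 * ‖h z‖ ^ 2 - (⟪lam, h x₀⟫ + c / 2 * ‖h x₀‖ ^ 2) =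
      ⟪lam + c • h x₀, h z⟫ - ⟪lam + c • h x₀, h x₀⟫ + c / 2 * ‖h z - h x₀‖ ^ 2 := by
    rw [norm_sub_sq_real, inner_add_left, inner_add_left, real_inner_smul_left,
      real_inner_smul_left, real_inner_self_eq_norm_sq, real_inner_comm (h z) (h x₀)]
    ring
  have hmu : 1 / (2 * c) * (‖muUpdate c μ (g z)‖ ^ 2 - ‖muUpdate c μ (g x₀)‖ ^ 2) ≤
      ⟪muUpdate c μ (g x₀), g z⟫ - ⟪muUpdate c μ (g x₀), g x₀⟫ + c / 2 * ‖g z - g x₀‖ ^ 2 := by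
    have hexp : 1 / (2 * c) * (2 * c * ⟪muUpdate c μ (g x₀), g z - g x₀⟫ +
        c ^ 2 * ‖g z - g x₀‖ ^ 2) =
        ⟪muUpdate c μ (g x₀), g z⟫ - ⟪muUpdate c μ (g x₀), g x₀⟫ + c / 2 * ‖g z - g x₀‖ ^ 2 := by
      rw [inner_sub_right]
      field_simp
    rw [← hexp]
    exact mul_le_mul_of_nonneg_left (norm_sq_muUpdate_sub_le c μ (g x₀) (g z)) (by positivity)
  simp only [AugLag, Lag, muUpdate] at *
  linarith

theorem lag_le_of_muUpdate {c : ℝ} (hc : 0 < c) (x₀ : E) (lam lam' : Evec m1) (μ : Evec m2)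
    {μ' : Evec m2} (hμ' : ∀ i, 0 ≤ μ' i) :
    Lag f h g x₀ lam' μ' ≤ Lag f h g x₀ lam (muUpdate c μ (g x₀)) - ⟪-h x₀, lam' - lam⟫ -
      ⟪muResidual c μ (g x₀), μ' - muUpdate c μ (g x₀)⟫ := by
  have key := inner_sub_muUpdate_add_muResidual_nonpos hc μ (g x₀) hμ'
  rw [inner_add_right, real_inner_comm (muResidual c μ (g x₀))] at key
  simp only [Lag, inner_neg_left, inner_sub_left, inner_sub_right, real_inner_comm (h x₀)] at *
  linarith

theorem convexOn_lag [AddCommGroup E] [Module ℝ E] (hf : ConvexOn ℝ univ f)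
    (hh : ∃ A : E →ᵃ[ℝ] Evec m1, ∀ z, h z = A z)
    (hg : ∀ i, ConvexOn ℝ univ (fun z => g z i)) (lam : Evec m1) {μ : Evec m2}
    (hμ : ∀ i, 0 ≤ μ i) : ConvexOn ℝ univ (fun z => Lag f h g z lam μ) := by
  obtain ⟨A, hA⟩ := hh
  have hlin : ConvexOn ℝ univ (fun z => ⟪lam, h z⟫) := by
    simpa [hA, Function.comp_def] using
      ((innerₛₗ ℝ lam).convexOn convex_univ).comp_affineMap A
  exact (hf.add hlin).add (convexOn_inner_of_nonneg convex_univ hμ hg)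

variable [NormedAddCommGroup E] [InnerProductSpace ℝ E]

theorem lag_subgradient_of_augLag_subgradient [FiniteDimensional ℝ E]
    (hf : ConvexOn ℝ univ f) (hh : ∃ A : E →ᵃ[ℝ] Evec m1, ∀ z, h z = A z)
    (hg₁ : ∀ i, ConvexOn ℝ univ (fun z => g z i)) {x₀ : E}
    (hg₂ : ∀ i, DifferentiableAt ℝ (fun z => g z i) x₀) {c : ℝ} (hc : 0 < c) {lam : Evec m1}
    {μ : Evec m2} {y : E}
    (hsub : ∀ z, AugLag f h g c x₀ lam μ + ⟪y, z - x₀⟫ ≤ AugLag f h g c z lam μ) (z : E) :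
    Lag f h g x₀ (lam + c • h x₀) (muUpdate c μ (g x₀)) + ⟪y, z - x₀⟫ ≤
      Lag f h g z (lam + c • h x₀) (muUpdate c μ (g x₀)) := by
  have hdh : DifferentiableAt ℝ h x₀ := by
    obtain ⟨A, hA⟩ := hh
    obtain rfl : h = A := funext hA
    exact (⟨A, A.continuous_of_finiteDimensional⟩ : E →ᴬ[ℝ] Evec m1).differentiableAt
  have hdg : DifferentiableAt ℝ g x₀ := differentiableAt_euclidean.2 hg₂
  refine (convexOn_lag hf hh hg₁ _ (muUpdate_nonneg c μ (g x₀))).add_inner_le_of_isLittleO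
    (((hdh.isLittleO_norm_sub_sq).add hdg.isLittleO_norm_sub_sq).const_mul_left (c / 2))
    (fun z => ?_) z
  linarith [hsub z, augLag_sub_augLag_le (f := f) (h := h) (g := g) hc lam μ x₀ z]

theorem saddleSubdiff_of_augLag_subgradient [FiniteDimensional ℝ E]
    (hf : ConvexOn ℝ univ f) (hh : ∃ A : E →ᵃ[ℝ] Evec m1, ∀ z, h z = A z)
    (hg₁ : ∀ i, ConvexOn ℝ univ (fun z => g z i)) {x₀ : E}
    (hg₂ : ∀ i, DifferentiableAt ℝ (fun z => g z i) x₀) {c : ℝ} (hc : 0 < c) {lam : Evec m1}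
    {μ : Evec m2} {y : E}
    (hsub : ∀ z, AugLag f h g c x₀ lam μ + ⟪y, z - x₀⟫ ≤ AugLag f h g c z lam μ) :
    saddleSubdiff f h g x₀ (lam + c • h x₀) (muUpdate c μ (g x₀)) y (-h x₀)
      (muResidual c μ (g x₀)) :=
  ⟨lag_subgradient_of_augLag_subgradient hf hh hg₁ hg₂ hc hsub,
    fun _ _ hμ' => lag_le_of_muUpdate hc x₀ _ _ μ hμ'⟩

theorem saddleSubdiff_monotone {x x' : E} {lam lam' : Evec m1} {μ μ' : Evec m2} {y y' : E}
    {u u' : Evec m1} {v v' : Evec m2} (h₁ : saddleSubdiff f h g x lam μ y u v)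
    (hμ : ∀ i, 0 ≤ μ i) (h₂ : saddleSubdiff f h g x' lam' μ' y' u' v') (hμ' : ∀ i, 0 ≤ μ' i) :
    0 ≤ ⟪y - y', x - x'⟫ + ⟪u - u', lam - lam'⟫ + ⟪v - v', μ - μ'⟫ := by
  have := h₁.1 x'
  have := h₂.1 x
  have := h₁.2 lam' μ' hμ'
  have := h₂.2 lam μ hμ
  simp only [inner_sub_left, inner_sub_right] at *
  linarith

end Lagrangian

theorem norm_mkDual_sq (a : Evec m1) (b : Evec m2) : ‖mkDual a b‖ ^ 2 = ‖a‖ ^ 2 + ‖b‖ ^ 2 :=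
  WithLp.prod_norm_sq_eq_of_L2 _

theorem mkDual_sub (a a' : Evec m1) (b b' : Evec m2) :
    mkDual a b - mkDual a' b' = mkDual (a - a') (b - b') :=
  rfl

theorem inner_mkDual (a a' : Evec m1) (b b' : Evec m2) :
    ⟪mkDual a b, mkDual a' b'⟫ = ⟪a, a'⟫ + ⟪b, b'⟫ :=
  WithLp.prod_inner_apply _ _

namespace ALMSeq

variable {E : Type*} [NormedAddCommGroup E] [InnerProductSpace ℝ E] {f : E → ℝ}
  {h : E → Evec m1} {g : E → Evec m2} {σ : ℝ} {c : ℕ → ℝ} {x y w : ℕ → E} {lam : ℕ → Evec m1}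
  {mu : ℕ → Evec m2}

theorem lam_succ (halg : ALMSeq f h g σ c x y w lam mu) (k : ℕ) :
    lam (k + 1) = lam k + c (k + 1) • h (x (k + 1)) :=
  halg.lam_update (k + 1) k.succ_pos

theorem mu_succ (halg : ALMSeq f h g σ c x y w lam mu) (k : ℕ) :
    mu (k + 1) = muUpdate (c (k + 1)) (mu k) (g (x (k + 1))) :=
  halg.mu_update (k + 1) k.succ_pos

theorem w_succ (halg : ALMSeq f h g σ c x y w lam mu) (k : ℕ) :
    w (k + 1) = w k - c (k + 1) • y (k + 1) :=
  halg.w_update (k + 1) k.succ_pos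

theorem mu_nonneg (halg : ALMSeq f h g σ c x y w lam mu) (k : ℕ) (i : Fin m2) : 0 ≤ mu k i := by
  cases k with
  | zero => exact halg.mu0_nonneg i
  | succ k => exact halg.mu_succ k ▸ muUpdate_nonneg _ _ _ i

theorem dualPair_succ (halg : ALMSeq f h g σ c x y w lam mu) (k : ℕ) :
    mkDual (lam (k + 1)) (mu (k + 1)) = mkDual (lam k) (mu k) -
      c (k + 1) • mkDual (-h (x (k + 1))) (muResidual (c (k + 1)) (mu k) (g (x (k + 1)))) := by
  rw [halg.lam_succ, halg.mu_succ, muUpdate_eq_sub_smul (halg.c_pos _)]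
  simp only [mkDual, ← WithLp.toLp_smul, ← WithLp.toLp_sub, Prod.smul_mk, Prod.mk_sub_mk, smul_neg,
    sub_neg_eq_add]

theorem err_succ (halg : ALMSeq f h g σ c x y w lam mu) (k : ℕ) :
    2 / c (k + 1) * |⟪w k - x (k + 1), y (k + 1)⟫| + ‖y (k + 1)‖ ^ 2 ≤
      σ * ‖mkDual (-h (x (k + 1))) (muResidual (c (k + 1)) (mu k) (g (x (k + 1))))‖ ^ 2 := by
  rw [norm_mkDual_sq, norm_neg]
  exact halg.err (k + 1) k.succ_pos

theorem inv_smul_sub_dualPair_succ (halg : ALMSeq f h g σ c x y w lam mu) (k : ℕ) :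
    (c (k + 1))⁻¹ • (mkDual (lam k) (mu k) - mkDual (lam (k + 1)) (mu (k + 1))) =
      mkDual (-h (x (k + 1))) (muResidual (c (k + 1)) (mu k) (g (x (k + 1)))) := by
  rw [halg.dualPair_succ, sub_sub_cancel, smul_smul, inv_mul_cancel₀ (halg.c_pos _).ne', one_smul]

theorem norm_sq_y_succ_le (halg : ALMSeq f h g σ c x y w lam mu) (k : ℕ) :
    ‖y (k + 1)‖ ^ 2 ≤
      σ * ‖mkDual (-h (x (k + 1))) (muResidual (c (k + 1)) (mu k) (g (x (k + 1))))‖ ^ 2 := by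
  have := halg.c_pos (k + 1)
  have : 0 ≤ 2 / c (k + 1) * |⟪w k - x (k + 1), y (k + 1)⟫| := by positivity
  linarith [halg.err_succ k]

theorem saddleSubdiff_succ [FiniteDimensional ℝ E] (halg : ALMSeq f h g σ c x y w lam mu)
    (hf : ConvexOn ℝ univ f) (hh : ∃ A : E →ᵃ[ℝ] Evec m1, ∀ z, h z = A z)
    (hg₁ : ∀ i, ConvexOn ℝ univ (fun z => g z i)) (hg₂ : ∀ i, Differentiable ℝ (fun z => g z i))
    (k : ℕ) :
    saddleSubdiff f h g (x (k + 1)) (lam (k + 1)) (mu (k + 1)) (y (k + 1)) (-h (x (k + 1)))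
      (muResidual (c (k + 1)) (mu k) (g (x (k + 1)))) := by
  rw [halg.lam_succ, halg.mu_succ]
  exact saddleSubdiff_of_augLag_subgradient hf hh hg₁ (fun i => hg₂ i _) (halg.c_pos _)
    (halg.subgrad (k + 1) k.succ_pos)

theorem fejer_succ [FiniteDimensional ℝ E] (halg : ALMSeq f h g σ c x y w lam mu)
    (hf : ConvexOn ℝ univ f) (hh : ∃ A : E →ᵃ[ℝ] Evec m1, ∀ z, h z = A z)
    (hg₁ : ∀ i, ConvexOn ℝ univ (fun z => g z i)) (hg₂ : ∀ i, Differentiable ℝ (fun z => g z i))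
    {xs : E} {ls : Evec m1} {ms : Evec m2} (hms : ∀ i, 0 ≤ ms i)
    (hsad : saddleSubdiff f h g xs ls ms 0 0 0) (k : ℕ) :
    ‖w (k + 1) - xs‖ ^ 2 + ‖mkDual (lam (k + 1)) (mu (k + 1)) - mkDual ls ms‖ ^ 2 +
        (1 - σ) * c (k + 1) ^ 2 *
          ‖mkDual (-h (x (k + 1))) (muResidual (c (k + 1)) (mu k) (g (x (k + 1))))‖ ^ 2 ≤
      ‖w k - xs‖ ^ 2 + ‖mkDual (lam k) (mu k) - mkDual ls ms‖ ^ 2 := by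
  have hmono := saddleSubdiff_monotone (halg.saddleSubdiff_succ hf hh hg₁ hg₂ k)
    (halg.mu_nonneg (k + 1)) hsad hms
  rw [halg.w_succ, halg.dualPair_succ]
  refine fejer_step_of_relative_error (halg.c_pos _) ?_ (halg.err_succ k)
  rw [← halg.dualPair_succ, mkDual_sub, inner_mkDual, ← add_assoc]
  simpa only [sub_zero] using hmono

end ALMSeq

theorem eckstein_silva_alm_residuals_tend_to_zero {f : X → ℝ} {h : X → Evec m1} {g : X → Evec m2}
    (hf : ConvexOn ℝ Set.univ f)
    (hh : ∃ A : X →ᵃ[ℝ] Evec m1, ∀ z, h z = A z)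
    (hg1 : ∀ i, ConvexOn ℝ Set.univ (fun z => g z i))
    (hg2 : ∀ i, ContDiff ℝ 1 (fun z => g z i))
    {σ : ℝ} {c : ℕ → ℝ} {x y w : ℕ → X} {lam : ℕ → Evec m1} {mu : ℕ → Evec m2}
    (halg : ALMSeq f h g σ c x y w lam mu)
    (hsad : (SaddlePoints f h g).Nonempty)
 :
    Tendsto (fun k =>
        (c (k + 1))⁻¹ • (mkDual (lam k) (mu k) - mkDual (lam (k + 1)) (mu (k + 1))))
      atTop (nhds 0) ∧
    Tendsto (fun k => y (k + 1)) atTop (nhds 0) := by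
  obtain ⟨_, xs, ls, ms, rfl, hms, hsad⟩ := hsad
  obtain ⟨cmin, hcmin, hc⟩ := halg.c_inf
  have hσ : 0 < 1 - σ := sub_pos.2 halg.sigma_lt_one
  set u := fun k => mkDual (-h (x (k + 1))) (muResidual (c (k + 1)) (mu k) (g (x (k + 1))))
  have hres := tendsto_zero_of_add_le
    (a := fun k => ‖w k - xs‖ ^ 2 + ‖mkDual (lam k) (mu k) - mkDual ls ms‖ ^ 2)
    (t := fun k => (1 - σ) * c (k + 1) ^ 2 * ‖u k‖ ^ 2) (fun k => by positivity)
    (fun k => by have := hσ.le; positivity)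
    (halg.fejer_succ hf hh hg1 (fun i => (hg2 i).differentiable one_ne_zero) hms hsad)
  have hu : Tendsto (fun k => ‖u k‖ ^ 2) atTop (𝓝 0) := by
    refine squeeze_zero (fun _ => by positivity) (fun k => ?_)
      (by simpa using hres.div_const ((1 - σ) * cmin ^ 2))
    rw [le_div_iff₀ (by positivity)]
    have := pow_le_pow_left₀ hcmin.le (hc (k + 1)) 2
    nlinarith [mul_le_mul_of_nonneg_left this (by positivity : 0 ≤ (1 - σ) * ‖u k‖ ^ 2)]
  have hy : Tendsto (fun k => ‖y (k + 1)‖ ^ 2) atTop (𝓝 0) :=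
    squeeze_zero (fun _ => by positivity) halg.norm_sq_y_succ_le (by simpa using hu.const_mul σ)
  simp_rw [halg.inv_smul_sub_dualPair_succ]
  exact ⟨tendsto_zero_of_tendsto_norm_sq hu, tendsto_zero_of_tendsto_norm_sq hy⟩
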